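/- For subsets A, B ⊆ Fin n such that either A ⊆ B or A ∩ B = ∅, one has M_A·|B⟩ = (K^(A) − I)·|B⟩, where I is the identity matrix on (Fin n → Fin 2)-indexed vectors. -/

import Mathlib

open Matrix


/-- The Markov generator `L_α = [[-1, 0], [1, 0]]`. -/
noncomputable def Lalpha : Matrix (Fin 2) (Fin 2) ℝ := !![-1, 0; 1, 0]

/-- The Markov generator `L_β = [[0, 1], [0, -1]]`. -/
noncomputable def Lbeta : Matrix (Fin 2) (Fin 2) ℝ := !![0, 1; 0, -1]

/-- `X^(A)`: the operator on the `n`-fold tensor power `(ℝ²)^⊗n` (indexed by functions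
`Fin n → Fin 2`) acting as `X` on the tensor factors in `A` and as the identity elsewhere:
`(X^(A))_{f,g} = (∏_{i ∈ A} X_{f(i),g(i)}) · (∏_{j ∉ A} [f(j) = g(j)])`. -/
noncomputable def opOn {n : ℕ} (X : Matrix (Fin 2) (Fin 2) ℝ) (A : Finset (Fin n)) :
    Matrix (Fin n → Fin 2) (Fin n → Fin 2) ℝ :=
  fun f g => (∏ i ∈ A, X (f i) (g i)) * ∏ j ∈ Aᶜ, (if f j = g j then (1 : ℝ) else 0)

/-- `𝔏_X^A := ∑_{∅ ≠ B ⊆ A} X^(B)`. -/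
noncomputable def frakLA {n : ℕ} (X : Matrix (Fin 2) (Fin 2) ℝ) (A : Finset (Fin n)) :
    Matrix (Fin n → Fin 2) (Fin n → Fin 2) ℝ :=
  ∑ B ∈ A.powerset.filter (fun B => B.Nonempty), opOn X B

/-- The binary-symmetric rate operator `M_A := 𝔏_α^A + 𝔏_β^A`. -/
noncomputable def MA {n : ℕ} (A : Finset (Fin n)) :
    Matrix (Fin n → Fin 2) (Fin n → Fin 2) ℝ :=
  frakLA Lalpha A + frakLA Lbeta A

/-- `|B⟩`: the standard basis vector of `ℝ^(Fin n → Fin 2)` at the indicator function of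
`B ⊆ Fin n`. -/
noncomputable def ket {n : ℕ} (B : Finset (Fin n)) : (Fin n → Fin 2) → ℝ :=
  fun f => if f = (fun i => if i ∈ B then 1 else 0) then 1 else 0

/-- The permutation matrix `K = [[0,1],[1,0]]`. -/
noncomputable def Kmat : Matrix (Fin 2) (Fin 2) ℝ := !![0, 1; 1, 0]

/-!
Writing `δ` for the identity, the binomial expansion of the tensor power gives
`∑_{C ⊆ A} X^(C) = (X + δ)^(A)`, hence `𝔏_X^A = (X + δ)^(A) − δ`. An entry `(f, g)` of `Y^(A)` only
involves the columns `g i`, `i ∈ A`, of `Y`. Against `|B⟩` these columns are all `1` when `A ⊆ B` and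
all `0` when `A ∩ B = ∅`. In column `1`, `L_α + δ` agrees with `δ` and `L_β + δ` with `K`; in
column `0` the roles are swapped. So one of the two terms of `M_A` vanishes on `|B⟩` and the other
acts as `K^(A) − δ`.
-/

section opOn

variable {n : ℕ}

theorem opOn_apply_congr {X Y : Matrix (Fin 2) (Fin 2) ℝ} {A : Finset (Fin n)}
    {f g : Fin n → Fin 2} (h : ∀ i ∈ A, X (f i) (g i) = Y (f i) (g i)) :
    opOn X A f g = opOn Y A f g := by
  rw [opOn, opOn, Finset.prod_congr rfl h]

theorem opOn_one (A : Finset (Fin n)) : opOn 1 A = 1 := by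
  ext f g
  simp only [opOn, one_apply]
  rw [Finset.prod_mul_prod_compl, Finset.prod_boole]
  simp [funext_iff]

theorem opOn_empty (X : Matrix (Fin 2) (Fin 2) ℝ) : opOn X (∅ : Finset (Fin n)) = 1 := by
  ext f g
  rw [opOn_apply_congr (Y := 1) (fun i hi => absurd hi (Finset.notMem_empty i)), opOn_one]

theorem sum_powerset_opOn (X : Matrix (Fin 2) (Fin 2) ℝ) (A : Finset (Fin n)) :
    ∑ C ∈ A.powerset, opOn X C = opOn (X + 1) A := by
  ext f g
  set δ : Fin n → ℝ := fun j => if f j = g j then 1 else 0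
  have split : ∀ C ∈ A.powerset, opOn X C f g =
      ((∏ i ∈ C, X (f i) (g i)) * ∏ j ∈ A \ C, δ j) * ∏ j ∈ Aᶜ, δ j := by
    intro C hC
    rw [opOn, mul_assoc, ← compl_sdiff_compl,
      Finset.prod_sdiff (Finset.compl_subset_compl.mpr (Finset.mem_powerset.mp hC))]
  rw [Matrix.sum_apply, Finset.sum_congr rfl split, ← Finset.sum_mul, ← Finset.prod_add]
  simp only [opOn, Matrix.add_apply, one_apply, δ]

theorem frakLA_eq_opOn_add_one_sub_one (X : Matrix (Fin 2) (Fin 2) ℝ) (A : Finset (Fin n)) :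
    frakLA X A = opOn (X + 1) A - 1 := by
  have nonempty_eq_erase : A.powerset.filter (fun C => C.Nonempty) = A.powerset.erase ∅ := by
    ext C
    simp [Finset.nonempty_iff_ne_empty, and_comm]
  rw [frakLA, nonempty_eq_erase, Finset.sum_erase_eq_sub (Finset.empty_mem_powerset A),
    sum_powerset_opOn, opOn_empty]

theorem mulVec_ket_apply (M : Matrix (Fin n → Fin 2) (Fin n → Fin 2) ℝ) (B : Finset (Fin n))
    (f : Fin n → Fin 2) : (M *ᵥ ket B) f = M f (fun i => if i ∈ B then 1 else 0) := by
  simp [mulVec, dotProduct, ket]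

end opOn

theorem Lalpha_add_one_apply_zero (a : Fin 2) : (Lalpha + 1) a 0 = Kmat a 0 := by
  fin_cases a <;> simp [Lalpha, Kmat]

theorem Lalpha_add_one_apply_one (a : Fin 2) :
    (Lalpha + 1) a 1 = (1 : Matrix (Fin 2) (Fin 2) ℝ) a 1 := by
  fin_cases a <;> simp [Lalpha, one_apply]

theorem Lbeta_add_one_apply_zero (a : Fin 2) :
    (Lbeta + 1) a 0 = (1 : Matrix (Fin 2) (Fin 2) ℝ) a 0 := by
  fin_cases a <;> simp [Lbeta, one_apply]

theorem Lbeta_add_one_apply_one (a : Fin 2) : (Lbeta + 1) a 1 = Kmat a 1 := by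
  fin_cases a <;> simp [Lbeta, Kmat]

/-- For `A, B ⊆ Fin n` with `A ⊆ B` or `A ∩ B = ∅`, `M_A·|B⟩ = (K^(A) − I)·|B⟩`. -/
theorem MA_ket_eq_K (n : ℕ) (A B : Finset (Fin n)) (h : A ⊆ B ∨ A ∩ B = ∅) :
    (MA A).mulVec (ket B) =
      (opOn Kmat A - (1 : Matrix (Fin n → Fin 2) (Fin n → Fin 2) ℝ)).mulVec (ket B) := by
  funext f
  rw [mulVec_ket_apply, mulVec_ket_apply, MA, frakLA_eq_opOn_add_one_sub_one,
    frakLA_eq_opOn_add_one_sub_one]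
  set g : Fin n → Fin 2 := fun i => if i ∈ B then 1 else 0
  simp only [Matrix.add_apply, Matrix.sub_apply]
  rcases h with hAB | hAB
  · have hg : ∀ i ∈ A, g i = 1 := fun i hi => if_pos (hAB hi)
    have hα : opOn (Lalpha + 1) A f g = opOn 1 A f g :=
      opOn_apply_congr fun i hi => by rw [hg i hi]; exact Lalpha_add_one_apply_one _
    have hβ : opOn (Lbeta + 1) A f g = opOn Kmat A f g :=
      opOn_apply_congr fun i hi => by rw [hg i hi]; exact Lbeta_add_one_apply_one _
    rw [hα, hβ, opOn_one]
    ring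
  · have hg : ∀ i ∈ A, g i = 0 := fun i hi =>
      if_neg (Finset.disjoint_left.mp (Finset.disjoint_iff_inter_eq_empty.mpr hAB) hi)
    have hα : opOn (Lalpha + 1) A f g = opOn Kmat A f g :=
      opOn_apply_congr fun i hi => by rw [hg i hi]; exact Lalpha_add_one_apply_zero _
    have hβ : opOn (Lbeta + 1) A f g = opOn 1 A f g :=
      opOn_apply_congr fun i hi => by rw [hg i hi]; exact Lbeta_add_one_apply_zero _
    rw [hα, hβ, opOn_one]
    ring
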